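/- Every function f: ℕ^k → ℝ on multisets drawn from a finite ground set {1,...,k} (represented by their count vectors) can be written as f(S) = ρ(Σ_{s∈S} φ(s)) for some φ: {1,...,k} → ℝ and ρ: ℝ → ℝ, provided multiset sizes are bounded by N: one may take φ(i) = (N+1)^{i−1}, so that the sum Σ_{s∈S} φ(s) is injective on multisets of size ≤ N, and then define ρ on the image to recover f. -/

import Mathlib

/-!
A count vector `c` with `∑ c i ≤ N` has every entry `< N + 1`, so `∑ c i (N+1)^i` is its base-`(N+1)`
expansion and determines `c`. Hence the encoding is injective on such vectors, and `ρ` can be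
defined on its image by `ρ (encode c) = f c` (and arbitrarily elsewhere).
-/

open Finset Function

theorem Nat.injOn_sum_mul_pow (b k : ℕ) :
    Set.InjOn (fun c : Fin k → ℕ => ∑ i, c i * b ^ (i : ℕ)) {c | ∀ i, c i < b} := by
  intro c hc d hd h
  rcases lt_or_ge 1 b with hb | hb
  · refine List.ofFn_inj.mp (Nat.ofDigits_inj_of_len_eq hb (by simp) ?_ ?_ ?_)
    · simpa [List.mem_ofFn] using hc
    · simpa [List.mem_ofFn] using hd
    · simpa [Nat.ofDigits_eq_sum_mapIdx, List.mapIdx_eq_ofFn, List.sum_ofFn, mul_comm] using h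
  · -- for `b ≤ 1` the only admissible vector is `0`
    funext i
    have := hc i; have := hd i
    omega

theorem apply_le_of_sum_le {k N : ℕ} {c : Fin k → ℕ} (hc : ∑ i, c i ≤ N) (i : Fin k) : c i ≤ N :=
  (single_le_sum (fun j _ => Nat.zero_le (c j)) (mem_univ i)).trans hc

/-- Every function on multisets over `{1,…,k}` (given by count vectors) of
size at most `N` can be written as `ρ(∑_{s∈S} φ(s))` with
`φ(i) = (N+1)^(i-1)` (zero-indexed: `(N+1)^i`). -/
theorem stmt_11 (k N : ℕ) (f : (Fin k → ℕ) → ℝ) :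
    ∃ (ρ : ℝ → ℝ) (φ : Fin k → ℝ),
      (∀ i : Fin k, φ i = ((N + 1 : ℕ) : ℝ) ^ (i : ℕ)) ∧
      ∀ c : Fin k → ℕ, (∑ i, c i) ≤ N →
        f c = ρ (∑ i, (c i : ℝ) * φ i) := by
  let φ : Fin k → ℝ := fun i => ((N + 1 : ℕ) : ℝ) ^ (i : ℕ)
  let encode : {c : Fin k → ℕ // ∑ i, c i ≤ N} → ℝ := fun c => ∑ i, (c.1 i : ℝ) * φ i
  have encode_injective : Injective encode := by
    intro c d h
    refine Subtype.ext (Nat.injOn_sum_mul_pow (N + 1) k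
      (fun i => Nat.lt_succ_of_le (apply_le_of_sum_le c.2 i))
      (fun i => Nat.lt_succ_of_le (apply_le_of_sum_le d.2 i)) ?_)
    simpa [encode, φ, ← Nat.cast_inj (R := ℝ)] using h
  refine ⟨extend encode (f ∘ Subtype.val) 0, φ, fun i => rfl, fun c hc => ?_⟩
  show f c = extend encode _ _ (encode ⟨c, hc⟩)
  exact (encode_injective.extend_apply (f ∘ Subtype.val) 0 ⟨c, hc⟩).symm
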